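/- arXiv:2212.10004 — 2 statements merged into one kernel-verified Lean document; each statement's English description precedes it below -/
import Mathlib

section
/- The coalition number of the triangular prism graph C_3 □ K_2 (the 3-prism, a cubic graph on 6 vertices) equals 6; equivalently, the partition of its vertex set into six singletons is a coalition partition. -/
/-!
No vertex of the prism dominates on its own, since its closed neighbourhood has only four of the
six vertices. But for a vertex `v` and either of its two non-neighbours `w`, the closed
neighbourhoods of `v` and `w` together cover the whole vertex set. So every singleton class of the
discrete partition has a coalition partner, and the discrete partition, whose order `6` is the
largest possible, is a coalition partition.
-/

open Finset

/-- `S` is a dominating set of `G`: every vertex outside `S` has a neighbor in `S`. -/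
def Dominates {V : Type*} (G : SimpleGraph V) (S : Finset V) : Prop :=
  ∀ v ∉ S, ∃ u ∈ S, G.Adj u v

/-- Two disjoint non-dominating sets whose union dominates form a coalition. -/
def FormsCoalition {V : Type*} [DecidableEq V] (G : SimpleGraph V) (X Y : Finset V) : Prop :=
  ¬ Dominates G X ∧ ¬ Dominates G Y ∧ Dominates G (X ∪ Y)

/-- A coalition partition: every class is a singleton dominating set, or is a
non-dominating set forming a coalition with another class. -/
def IsCoalitionPartition {V : Type*} [Fintype V] [DecidableEq V] (G : SimpleGraph V)
    (π : Finpartition (univ : Finset V)) : Prop :=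
  ∀ X ∈ π.parts, (X.card = 1 ∧ Dominates G X) ∨
    (¬ Dominates G X ∧ ∃ Y ∈ π.parts, Y ≠ X ∧ ¬ Dominates G Y ∧ Dominates G (X ∪ Y))

/-- The coalition number: the maximum order of a coalition partition. -/
noncomputable def coalitionNumber (V : Type*) [Fintype V] [DecidableEq V]
    (G : SimpleGraph V) : ℕ :=
  sSup {k | ∃ π : Finpartition (univ : Finset V), IsCoalitionPartition G π ∧ π.parts.card = k}

def prism : SimpleGraph (Fin 6) :=
  SimpleGraph.fromRel (fun a b =>
    (a.val, b.val) ∈ [(0,1),(1,2),(0,2),(3,4),(4,5),(3,5),(0,3),(1,4),(2,5)])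

section Coalition

variable {V : Type*} [Fintype V] [DecidableEq V] {G : SimpleGraph V}

theorem isCoalitionPartition_bot
    (h : ∀ v, ¬ Dominates G {v} ∧ ∃ w ≠ v, Dominates G ({v} ∪ {w})) :
    IsCoalitionPartition G ⊥ := by
  intro X hX
  obtain ⟨v, -, rfl⟩ := Finpartition.mem_bot_iff.mp hX
  obtain ⟨hv, w, hwv, hvw⟩ := h v
  exact Or.inr ⟨hv, {w}, Finpartition.mem_bot_iff.mpr ⟨w, mem_univ w, rfl⟩,
    mt singleton_inj.mp hwv, (h w).1, hvw⟩

theorem coalitionNumber_eq_card_of_isCoalitionPartition_bot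
    (h : IsCoalitionPartition G ⊥) : coalitionNumber V G = Fintype.card V := by
  have hmem : Fintype.card V ∈
      {k | ∃ π : Finpartition (univ : Finset V), IsCoalitionPartition G π ∧ #π.parts = k} :=
    ⟨⊥, h, Finpartition.card_bot _⟩
  have hle : ∀ k ∈
      {k | ∃ π : Finpartition (univ : Finset V), IsCoalitionPartition G π ∧ #π.parts = k},
      k ≤ Fintype.card V := by
    rintro k ⟨π, -, rfl⟩
    exact π.card_parts_le_card
  exact le_antisymm (csSup_le ⟨_, hmem⟩ hle) (le_csSup ⟨_, hle⟩ hmem)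

end Coalition

instance : DecidableRel prism.Adj := fun a b =>
  inferInstanceAs (Decidable (a ≠ b ∧ _))

instance {V : Type*} [Fintype V] [DecidableEq V] (G : SimpleGraph V) [DecidableRel G.Adj]
    (S : Finset V) : Decidable (Dominates G S) :=
  inferInstanceAs (Decidable (∀ v ∉ S, ∃ u ∈ S, G.Adj u v))

theorem prism_singleton_coalitions :
    ∀ v, ¬ Dominates prism {v} ∧ ∃ w ≠ v, Dominates prism ({v} ∪ {w}) := by
  decide

theorem stmt6 : coalitionNumber (Fin 6) prism = 6 ∧
    IsCoalitionPartition prism ((⊥ : Finpartition (univ : Finset (Fin 6)))) := by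
  have hbot := isCoalitionPartition_bot prism_singleton_coalitions
  exact ⟨(coalitionNumber_eq_card_of_isCoalitionPartition_bot hbot).trans (Fintype.card_fin 6),
    hbot⟩
end

section
/- If π is a domatic partition of a graph G into k dominating sets each of which is minimal and of size at least 2, then C(G) ≥ 2k: splitting each class into two nonempty parts yields a coalition partition with 2k classes. -/
open Finset

namespace Finpartition

variable {α : Type*} [DecidableEq α] {s t : Finset α}

lemma exists_card_parts_eq_two (hs : 2 ≤ #s) : ∃ P : Finpartition s, #P.parts = 2 := by
  obtain ⟨x, hx⟩ := card_pos.1 (by omega : 0 < #s)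
  have hrest : s.erase x ≠ ∅ := (card_pos.1 (by rw [card_erase_of_mem hx]; omega)).ne_empty
  have hunion : {x} ⊔ s.erase x = s := by rw [sup_eq_union, ← insert_eq, insert_erase hx]
  exact ⟨(indiscrete (singleton_ne_empty x)).extend hrest
    (disjoint_singleton_left.2 (notMem_erase x s)) hunion,
    by rw [card_extend, indiscrete_parts, card_singleton]⟩

lemma ssubset_of_mem_parts (P : Finpartition s) (hP : 1 < #P.parts) (ht : t ∈ P.parts) :
    t ⊂ s := by
  obtain ⟨u, hu, hut⟩ := exists_mem_ne hP t
  refine ssubset_of_subset_of_ne (P.le ht) fun hts ↦ ?_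
  obtain ⟨v, hv⟩ := P.nonempty_of_mem_parts hu
  exact disjoint_left.1 (P.disjoint hu ht hut) hv (hts ▸ P.le hu hv)

lemma exists_union_eq_of_card_parts_eq_two (P : Finpartition s) (hP : #P.parts = 2)
    (ht : t ∈ P.parts) : ∃ u ∈ P.parts, u ≠ t ∧ t ∪ u = s := by
  obtain ⟨u, hu, hut⟩ := exists_mem_ne (by omega : 1 < #P.parts) t
  have hparts : P.parts = {t, u} :=
    (eq_of_subset_of_card_le (insert_subset ht (singleton_subset_iff.2 hu))
      (by rw [hP, card_pair hut.symm])).symm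
  refine ⟨u, hu, hut, ?_⟩
  rw [← P.sup_parts, hparts, sup_insert, sup_singleton]
  rfl

end Finpartition

section Coalition

variable {V : Type*} {G : SimpleGraph V}

def IsMinimalDominating (G : SimpleGraph V) (X : Finset V) : Prop :=
  Dominates G X ∧ ∀ X' ⊂ X, ¬ Dominates G X'

lemma IsMinimalDominating.formsCoalition_of_mem_parts [DecidableEq V] {X Y : Finset V}
    (hX : IsMinimalDominating G X) (P : Finpartition X) (hP : #P.parts = 2) (hY : Y ∈ P.parts) :
    ∃ Z ∈ P.parts, Z ≠ Y ∧ FormsCoalition G Y Z := by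
  obtain ⟨Z, hZ, hZY, hYZ⟩ := P.exists_union_eq_of_card_parts_eq_two hP hY
  have hlt : 1 < #P.parts := by omega
  exact ⟨Z, hZ, hZY, hX.2 Y (P.ssubset_of_mem_parts hlt hY),
    hX.2 Z (P.ssubset_of_mem_parts hlt hZ), hYZ ▸ hX.1⟩

variable [Fintype V] [DecidableEq V]

theorem isCoalitionPartition_bind {π : Finpartition (univ : Finset V)}
    (hπ : ∀ X ∈ π.parts, IsMinimalDominating G X) (Q : ∀ X ∈ π.parts, Finpartition X)
    (hQ : ∀ X hX, #(Q X hX).parts = 2) : IsCoalitionPartition G (π.bind Q) := by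
  intro Y hY
  obtain ⟨X, hX, hYX⟩ := Finpartition.mem_bind.1 hY
  obtain ⟨Z, hZ, hZY, hYdom, hZdom, hYZ⟩ :=
    (hπ X hX).formsCoalition_of_mem_parts _ (hQ X hX) hYX
  exact .inr ⟨hYdom, Z, Finpartition.mem_bind.2 ⟨X, hX, hZ⟩, hZY, hZdom, hYZ⟩

theorem card_parts_le_coalitionNumber {π : Finpartition (univ : Finset V)}
    (hπ : IsCoalitionPartition G π) : #π.parts ≤ coalitionNumber V G := by
  refine le_csSup ⟨Fintype.card V, ?_⟩ ⟨π, hπ, rfl⟩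
  rintro k ⟨ρ, -, rfl⟩
  simpa using ρ.card_parts_le_card

end Coalition

theorem stmt14 {V : Type*} [Fintype V] [DecidableEq V] (G : SimpleGraph V)
    (π : Finpartition (univ : Finset V))
    (hdom : ∀ X ∈ π.parts,
      Dominates G X ∧ (∀ X' ⊂ X, ¬ Dominates G X') ∧ 2 ≤ X.card) :
    2 * π.parts.card ≤ coalitionNumber V G := by
  choose Q hQ using fun X (hX : X ∈ π.parts) ↦
    Finpartition.exists_card_parts_eq_two (hdom X hX).2.2
  calc 2 * #π.parts = #(π.bind Q).parts := by
        rw [Finpartition.card_bind, sum_congr rfl fun X _ ↦ hQ X.1 X.2, sum_const, card_attach,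
          smul_eq_mul, mul_comm]
    _ ≤ coalitionNumber V G := card_parts_le_coalitionNumber <|
        isCoalitionPartition_bind (fun X hX ↦ ⟨(hdom X hX).1, (hdom X hX).2.1⟩) Q hQ
end
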